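/- Let A be an abelian group, let U ≤ G×H and V ≤ H×K be subgroups, and let φ : U → A and ψ : V → A be group homomorphisms such that φ(1,h)⁻¹ = ψ(h,1) for every h ∈ H with (1,h) ∈ U and (h,1) ∈ V. Then there exists a unique group homomorphism Φ : U∗V → A such that Φ(g,k) = φ(g,h)·ψ(h,k) whenever (g,h) ∈ U and (h,k) ∈ V. -/

import Mathlib

/-!
Pull `φ` and `ψ` back to the group of triples `(g, h, k)` with `(g, h) ∈ U` and `(h, k) ∈ V`:
their product `(g, h, k) ↦ φ(g, h) ψ(h, k)` is a homomorphism because `A` is abelian.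
The projection `(g, h, k) ↦ (g, k)` maps the triples onto `U∗V`, and its kernel consists of the
triples `(1, h, 1)`, on which the product is trivial exactly by the compatibility condition.
So the product descends uniquely to `U∗V`.
-/

variable {G H K L A : Type*}

/-- The star product `U∗V = {(g,k) | ∃ h, (g,h) ∈ U ∧ (h,k) ∈ V}` of subgroups of
direct products. -/
def starSub [Group G] [Group H] [Group K]
    (U : Subgroup (G × H)) (V : Subgroup (H × K)) : Subgroup (G × K) where
  carrier := {p : G × K | ∃ h : H, (p.1, h) ∈ U ∧ (h, p.2) ∈ V}
  one_mem' := ⟨1, U.one_mem, V.one_mem⟩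
  mul_mem' := by
    rintro ⟨g1, k1⟩ ⟨g2, k2⟩ ⟨h1, hu1, hv1⟩ ⟨h2, hu2, hv2⟩
    exact ⟨h1 * h2, U.mul_mem hu1 hu2, V.mul_mem hv1 hv2⟩
  inv_mem' := by
    rintro ⟨g, k⟩ ⟨h, hu, hv⟩
    exact ⟨h⁻¹, U.inv_mem hu, V.inv_mem hv⟩

theorem MonoidHom.existsUnique_comp_eq_of_surjective {G₁ G₂ G₃ : Type*} [Group G₁] [Group G₂]
    [Group G₃] {f : G₁ →* G₂} (hf : Function.Surjective f) {g : G₁ →* G₃} (hg : f.ker ≤ g.ker) :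
    ∃! Φ : G₂ →* G₃, Φ.comp f = g :=
  have hlift := f.liftOfRightInverse_comp _ (Function.rightInverse_surjInv hf) ⟨g, hg⟩
  ⟨_, hlift, fun _ hΦ ↦ (cancel_right hf).1 (hΦ.trans hlift.symm)⟩

section StarTriples

variable [Group G] [Group H] [Group K] (U : Subgroup (G × H)) (V : Subgroup (H × K))

def starTriples : Subgroup (G × H × K) where
  carrier := {x | (x.1, x.2.1) ∈ U ∧ x.2 ∈ V}
  one_mem' := ⟨U.one_mem, V.one_mem⟩
  mul_mem' hx hy := ⟨U.mul_mem hx.1 hy.1, V.mul_mem hx.2 hy.2⟩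
  inv_mem' hx := ⟨U.inv_mem hx.1, V.inv_mem hx.2⟩

namespace starTriples

def toLeft : starTriples U V →* U where
  toFun x := ⟨(x.1.1, x.1.2.1), x.2.1⟩
  map_one' := rfl
  map_mul' _ _ := rfl

def toRight : starTriples U V →* V where
  toFun x := ⟨x.1.2, x.2.2⟩
  map_one' := rfl
  map_mul' _ _ := rfl

def proj : starTriples U V →* starSub U V where
  toFun x := ⟨(x.1.1, x.1.2.2), x.1.2.1, x.2⟩
  map_one' := rfl
  map_mul' _ _ := rfl

theorem proj_surjective : Function.Surjective (proj U V) := by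
  rintro ⟨⟨g, k⟩, h, hU, hV⟩
  exact ⟨⟨(g, h, k), hU, hV⟩, rfl⟩

variable {U V}

theorem ker_proj_le [CommGroup A] (φ : U →* A) (ψ : V →* A)
    (hcompat : ∀ (h : H) (hU : ((1 : G), h) ∈ U) (hV : (h, (1 : K)) ∈ V),
      (φ ⟨((1 : G), h), hU⟩)⁻¹ = ψ ⟨(h, (1 : K)), hV⟩) :
    (proj U V).ker ≤ (φ.comp (toLeft U V) * ψ.comp (toRight U V)).ker := by
  rintro ⟨⟨g, h, k⟩, hU, hV⟩ hx
  obtain ⟨rfl, rfl⟩ : g = 1 ∧ k = 1 := Prod.ext_iff.1 (Subtype.ext_iff.1 hx)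
  exact mul_eq_one_iff_inv_eq.2 (hcompat h hU hV)

theorem comp_proj_eq_iff [CommGroup A] {φ : U →* A} {ψ : V →* A} {Φ : starSub U V →* A} :
    Φ.comp (proj U V) = φ.comp (toLeft U V) * ψ.comp (toRight U V) ↔
      ∀ (g : G) (h : H) (k : K) (hU : (g, h) ∈ U) (hV : (h, k) ∈ V),
        Φ ⟨(g, k), ⟨h, hU, hV⟩⟩ = φ ⟨(g, h), hU⟩ * ψ ⟨(h, k), hV⟩ := by
  constructor
  · intro hΦ g h k hU hV
    exact DFunLike.congr_fun hΦ ⟨(g, h, k), hU, hV⟩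
  · intro hΦ
    ext ⟨⟨g, h, k⟩, hU, hV⟩
    exact hΦ g h k hU hV

end starTriples

end StarTriples

/-- If `φ : U → A` and `ψ : V → A` satisfy the compatibility condition
`φ(1,h)⁻¹ = ψ(h,1)` whenever `(1,h) ∈ U` and `(h,1) ∈ V`, then there is a unique group
homomorphism `Φ : U∗V → A` with `Φ(g,k) = φ(g,h)·ψ(h,k)` whenever `(g,h) ∈ U` and
`(h,k) ∈ V`. -/
theorem star_hom_exists_unique [Group G] [Group H] [Group K] [CommGroup A]
    (U : Subgroup (G × H)) (V : Subgroup (H × K)) (φ : U →* A) (ψ : V →* A)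
    (hcompat : ∀ (h : H) (hU : ((1 : G), h) ∈ U) (hV : (h, (1 : K)) ∈ V),
      (φ ⟨((1 : G), h), hU⟩)⁻¹ = ψ ⟨(h, (1 : K)), hV⟩) :
    ∃! Φ : starSub U V →* A,
      ∀ (g : G) (h : H) (k : K) (hU : (g, h) ∈ U) (hV : (h, k) ∈ V),
        Φ ⟨(g, k), ⟨h, hU, hV⟩⟩ = φ ⟨(g, h), hU⟩ * ψ ⟨(h, k), hV⟩ :=
  (existsUnique_congr fun _ ↦ starTriples.comp_proj_eq_iff).1 <|
    MonoidHom.existsUnique_comp_eq_of_surjective (starTriples.proj_surjective U V)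
      (starTriples.ker_proj_le φ ψ hcompat)
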